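/- Let L ≥ 1, let ρ be an n-qubit density matrix (positive semidefinite complex 2^n × 2^n matrix with trace 1), let U_1, …, U_L be unitary 2^n × 2^n matrices, and let w_1, …, w_L be nonnegative reals with ∑_{i=1}^L w_i = 1. Define σ = ∑_{i=1}^L ∑_{j=1}^L √(w_i w_j) · (E_{ij} ⊗ U_i ρ U_j†) as a Kronecker-product block matrix, where E_{ij} is the L × L matrix unit. Let Z be a Hermitian 2^n × 2^n matrix with Z² = I. Then Tr(σ · (I_L ⊗ Z)) = ∑_{i=1}^L w_i m_i, where m_i = Tr(U_i ρ U_i† Z), and Tr(σ · (I_L ⊗ Z)²) = 1; consequently the variance of the measurement of I_L ⊗ Z in the state σ, namely Tr(σ(I_L⊗Z)²) − (Tr(σ(I_L⊗Z)))², equals 1 − (∑_{i=1}^L w_i m_i)². -/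

import Mathlib

/-! Measuring `1 ⊗ B` on `σ` only sees the diagonal blocks `√(w i w i) U i ρ U iᴴ = w i U i ρ U iᴴ`,
so the mean of `1 ⊗ Z` is the `w`-average of the `m i`. Since `(1 ⊗ Z)² = 1` and conjugation by a
unitary preserves the trace, the second moment is `∑ i w i Tr ρ = 1`. -/

open Matrix Kronecker BigOperators
open scoped ComplexOrder

/-- The relevant diagonal block of the output density matrix of the LCU circuit
with control state `∑ i √(w i) |i⟩` and controlled unitaries `U i` applied to `ρ`. -/
noncomputable def lcuSigma {L m : ℕ} (w : Fin L → ℝ)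
    (ρ : Matrix (Fin m) (Fin m) ℂ) (U : Fin L → Matrix (Fin m) (Fin m) ℂ) :
    Matrix (Fin L × Fin m) (Fin L × Fin m) ℂ :=
  ∑ i, ∑ j, (Real.sqrt (w i * w j) : ℂ) •
    (Matrix.single i j (1 : ℂ) ⊗ₖ (U i * ρ * (U j)ᴴ))

namespace Matrix

theorem trace_single_kronecker_mul_one_kronecker {R ι m : Type*} [CommSemiring R]
    [Fintype ι] [DecidableEq ι] [Fintype m] (i j : ι) (c : R) (A B : Matrix m m R) :
    ((single i j c ⊗ₖ A) * ((1 : Matrix ι ι R) ⊗ₖ B)).trace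
      = if i = j then c * (A * B).trace else 0 := by
  rw [← mul_kronecker_mul, mul_one, trace_kronecker]
  split_ifs with hij
  · rw [hij, trace_single_eq_same]
  · rw [trace_single_eq_of_ne i j c hij, zero_mul]

theorem trace_conj_of_mem_unitaryGroup {α n : Type*} [CommRing α] [StarRing α]
    [Fintype n] [DecidableEq n] {U : Matrix n n α} (hU : U ∈ unitaryGroup n α)
    (A : Matrix n n α) : (U * A * Uᴴ).trace = A.trace := by
  rw [trace_mul_cycle, ← star_eq_conjTranspose, Unitary.star_mul_self_of_mem hU, one_mul]

end Matrix

theorem trace_lcuSigma_mul_one_kronecker {L m : ℕ} {w : Fin L → ℝ} (hw : ∀ i, 0 ≤ w i)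
    (ρ : Matrix (Fin m) (Fin m) ℂ) (U : Fin L → Matrix (Fin m) (Fin m) ℂ)
    (B : Matrix (Fin m) (Fin m) ℂ) :
    (lcuSigma w ρ U * ((1 : Matrix (Fin L) (Fin L) ℂ) ⊗ₖ B)).trace
      = ∑ i, (w i : ℂ) * (U i * ρ * (U i)ᴴ * B).trace := by
  simp only [lcuSigma, Finset.sum_mul, trace_sum, smul_mul_assoc, trace_smul,
    trace_single_kronecker_mul_one_kronecker, one_mul, smul_eq_mul, mul_ite, mul_zero,
    Finset.sum_ite_eq, Finset.mem_univ, if_true, Real.sqrt_mul_self (hw _)]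

theorem lcu_Z_mean_and_variance_general
    (L n : ℕ)
    (ρ : Matrix (Fin (2 ^ n)) (Fin (2 ^ n)) ℂ)
    (hρtr : ρ.trace = 1)
    (U : Fin L → Matrix (Fin (2 ^ n)) (Fin (2 ^ n)) ℂ)
    (hU : ∀ i, U i ∈ Matrix.unitaryGroup (Fin (2 ^ n)) ℂ)
    (w : Fin L → ℝ) (hw : ∀ i, 0 ≤ w i) (hw1 : ∑ i, w i = 1)
    (Z : Matrix (Fin (2 ^ n)) (Fin (2 ^ n)) ℂ)
    (hZ2 : Z * Z = 1) :
    (lcuSigma w ρ U * ((1 : Matrix (Fin L) (Fin L) ℂ) ⊗ₖ Z)).trace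
        = ∑ i, (w i : ℂ) * (U i * ρ * (U i)ᴴ * Z).trace ∧
    (lcuSigma w ρ U *
        (((1 : Matrix (Fin L) (Fin L) ℂ) ⊗ₖ Z) * ((1 : Matrix (Fin L) (Fin L) ℂ) ⊗ₖ Z))).trace
        = 1 ∧
    (lcuSigma w ρ U *
        (((1 : Matrix (Fin L) (Fin L) ℂ) ⊗ₖ Z) * ((1 : Matrix (Fin L) (Fin L) ℂ) ⊗ₖ Z))).trace
      - ((lcuSigma w ρ U * ((1 : Matrix (Fin L) (Fin L) ℂ) ⊗ₖ Z)).trace) ^ 2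
        = 1 - (∑ i, (w i : ℂ) * (U i * ρ * (U i)ᴴ * Z).trace) ^ 2 := by
  have hmean := trace_lcuSigma_mul_one_kronecker hw ρ U Z
  have hsq : ((1 : Matrix (Fin L) (Fin L) ℂ) ⊗ₖ Z) * ((1 : Matrix (Fin L) (Fin L) ℂ) ⊗ₖ Z) = 1 := by
    rw [← mul_kronecker_mul, one_mul, hZ2, one_kronecker_one]
  have hsecond : (lcuSigma w ρ U *
      (((1 : Matrix (Fin L) (Fin L) ℂ) ⊗ₖ Z) * ((1 : Matrix (Fin L) (Fin L) ℂ) ⊗ₖ Z))).trace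
      = 1 := by
    rw [hsq, ← one_kronecker_one, trace_lcuSigma_mul_one_kronecker hw ρ U 1]
    simp only [mul_one, trace_conj_of_mem_unitaryGroup (hU _), hρtr]
    exact_mod_cast hw1
  exact ⟨hmean, hsecond, by rw [hmean, hsecond]⟩

/-- Z-measurement part of Theorem 1 (Mean and variance of the LCU estimator):
for a Hermitian `Z` with `Z² = 1`, `Tr(σ (I_L ⊗ Z)) = ∑ i w i * m i`
with `m i = Tr(U i ρ U iᴴ Z)`, `Tr(σ (I_L ⊗ Z)²) = 1`, and hence the variance is
`1 − (∑ i w i * m i)²`. -/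
theorem lcu_Z_mean_and_variance
    (L n : ℕ) (hL : 1 ≤ L)
    (ρ : Matrix (Fin (2 ^ n)) (Fin (2 ^ n)) ℂ)
    (hρ : ρ.PosSemidef) (hρtr : ρ.trace = 1)
    (U : Fin L → Matrix (Fin (2 ^ n)) (Fin (2 ^ n)) ℂ)
    (hU : ∀ i, U i ∈ Matrix.unitaryGroup (Fin (2 ^ n)) ℂ)
    (w : Fin L → ℝ) (hw : ∀ i, 0 ≤ w i) (hw1 : ∑ i, w i = 1)
    (Z : Matrix (Fin (2 ^ n)) (Fin (2 ^ n)) ℂ)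
    (hZ1 : Zᴴ = Z) (hZ2 : Z * Z = 1) :
    (lcuSigma w ρ U * ((1 : Matrix (Fin L) (Fin L) ℂ) ⊗ₖ Z)).trace
        = ∑ i, (w i : ℂ) * (U i * ρ * (U i)ᴴ * Z).trace ∧
    (lcuSigma w ρ U *
        (((1 : Matrix (Fin L) (Fin L) ℂ) ⊗ₖ Z) * ((1 : Matrix (Fin L) (Fin L) ℂ) ⊗ₖ Z))).trace
        = 1 ∧
    (lcuSigma w ρ U *
        (((1 : Matrix (Fin L) (Fin L) ℂ) ⊗ₖ Z) * ((1 : Matrix (Fin L) (Fin L) ℂ) ⊗ₖ Z))).trace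
      - ((lcuSigma w ρ U * ((1 : Matrix (Fin L) (Fin L) ℂ) ⊗ₖ Z)).trace) ^ 2
        = 1 - (∑ i, (w i : ℂ) * (U i * ρ * (U i)ᴴ * Z).trace) ^ 2 :=
  lcu_Z_mean_and_variance_general L n ρ hρtr U hU w hw hw1 Z hZ2
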